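/- arXiv:2601.20644 — 4 statements merged into one kernel-verified Lean document; each statement's English description precedes it below -/
import Mathlib

section
/- The number of greedy binary words of length n (binary words avoiding the factor 011) equals F_{n+3} − 1, where F is the Fibonacci sequence with F₀ = 0, F₁ = 1. -/
/-- A binary word avoids the factor `011`. -/
def Greedy {n : ℕ} (c : Fin n → Fin 2) : Prop :=
  ∀ i j k : Fin n, (j : ℕ) = (i : ℕ) + 1 → (k : ℕ) = (i : ℕ) + 2 →
    ¬ (c i = 0 ∧ c j = 1 ∧ c k = 1)

namespace GreedyAux

lemma fin2_eq_one {a : Fin 2} (h : a ≠ 0) : a = 1 := by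
  fin_cases a
  · exact absurd rfl h
  · rfl

lemma fin2_eq_zero {a : Fin 2} (h : a ≠ 1) : a = 0 := by
  fin_cases a
  · rfl
  · exact absurd rfl h

lemma snoc_apply_lt {n : ℕ} (p : Fin n → Fin 2) (a : Fin 2) (i : Fin (n+1)) (h : (i : ℕ) < n) :
    (Fin.snoc p a : Fin (n+1) → Fin 2) i = p ⟨(i : ℕ), h⟩ := by
  conv_lhs => rw [show i = Fin.castSucc ⟨(i : ℕ), h⟩ from Fin.ext rfl]
  rw [Fin.snoc_castSucc]

lemma snoc_apply_last {n : ℕ} (p : Fin n → Fin 2) (a : Fin 2) (i : Fin (n+1))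
    (h : (i : ℕ) = n) : (Fin.snoc p a : Fin (n+1) → Fin 2) i = a := by
  conv_lhs => rw [show i = Fin.last n from Fin.ext (by simpa using h)]
  rw [Fin.snoc_last]

lemma greedy_init {n : ℕ} {c : Fin (n+1) → Fin 2} (hc : Greedy c) : Greedy (Fin.init c) := by
  intro i j k hj hk hpat
  exact hc i.castSucc j.castSucc k.castSucc (by simpa using hj) (by simpa using hk) hpat

lemma greedy_snoc_zero {n : ℕ} {p : Fin n → Fin 2} (hp : Greedy p) :
    Greedy (Fin.snoc p (0 : Fin 2)) := by
  intro i j k hj hk hpat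
  obtain ⟨h1, h2, h3⟩ := hpat
  by_cases hk' : (k : ℕ) < n
  · rw [snoc_apply_lt _ _ k hk'] at h3
    rw [snoc_apply_lt _ _ j (by omega)] at h2
    rw [snoc_apply_lt _ _ i (by omega)] at h1
    exact hp ⟨(i : ℕ), by omega⟩ ⟨(j : ℕ), by omega⟩ ⟨(k : ℕ), hk'⟩ hj hk ⟨h1, h2, h3⟩
  · have hkv : (k : ℕ) = n := by have := k.isLt; omega
    rw [snoc_apply_last _ _ k hkv] at h3
    exact absurd h3 (by decide)

lemma greedy_snoc10 {n : ℕ} {q : Fin n → Fin 2} (hq : Greedy q) :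
    Greedy (Fin.snoc (Fin.snoc q (0 : Fin 2)) (1 : Fin 2)) := by
  intro i j k hj hk hpat
  obtain ⟨h1, h2, h3⟩ := hpat
  by_cases hk1 : (k : ℕ) < n + 1
  · rw [snoc_apply_lt _ _ k hk1] at h3
    rw [snoc_apply_lt _ _ j (by omega)] at h2
    rw [snoc_apply_lt _ _ i (by omega)] at h1
    exact greedy_snoc_zero hq ⟨(i : ℕ), by omega⟩ ⟨(j : ℕ), by omega⟩ ⟨(k : ℕ), hk1⟩
      hj hk ⟨h1, h2, h3⟩
  · have hkv : (k : ℕ) = n + 1 := by have := k.isLt; omega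
    have hjv : (j : ℕ) = n := by omega
    rw [snoc_apply_lt _ _ j (by omega)] at h2
    rw [snoc_apply_last _ _ _ (show ((⟨(j : ℕ), by omega⟩ : Fin (n+1)) : ℕ) = n from hjv)] at h2
    exact absurd h2 (by decide)

lemma greedy_one {n : ℕ} : Greedy (fun _ : Fin n => (1 : Fin 2)) := by
  intro i j k _ _ hpat
  simpa using hpat.1

lemma eq_one_of_tail {n : ℕ} {c : Fin (n+2) → Fin 2} (hc : Greedy c)
    (h1 : c ⟨n+1, by omega⟩ = 1) (h2 : c ⟨n, by omega⟩ = 1) : ∀ i, c i = 1 := by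
  have key : ∀ m, m ≤ n + 1 → c ⟨n + 1 - m, by omega⟩ = 1 := by
    intro m
    induction m using Nat.strong_induction_on with
    | _ m ih =>
      match m with
      | 0 => intro _; simpa using h1
      | 1 => intro _; simpa using h2
      | (k+2) =>
        intro hm
        by_contra h0
        have e1 : c ⟨n + 1 - (k+1), by omega⟩ = 1 := ih (k+1) (by omega) (by omega)
        have e2 : c ⟨n + 1 - k, by omega⟩ = 1 := ih k (by omega) (by omega)
        refine hc ⟨n + 1 - (k+2), by omega⟩ ⟨n + 1 - (k+1), by omega⟩ ⟨n + 1 - k, by omega⟩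
          (by simp; omega) (by simp; omega) ⟨fin2_eq_zero ?_, e1, e2⟩
        intro h; exact h0 (by simpa using h)
  intro i
  have hi := i.isLt
  have := key (n + 1 - (i : ℕ)) (by omega)
  have heq : (⟨n + 1 - (n + 1 - (i : ℕ)), by omega⟩ : Fin (n+2)) = i := Fin.ext (by simp; omega)
  rwa [heq] at this

def theEquiv (n : ℕ) : {c : Fin (n+2) → Fin 2 // Greedy c} ≃
    ({c : Fin (n+1) → Fin 2 // Greedy c} ⊕ ({c : Fin n → Fin 2 // Greedy c} ⊕ Unit)) where
  toFun := fun x =>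
    if h0 : x.1 (Fin.last (n+1)) = 0 then Sum.inl ⟨Fin.init x.1, greedy_init x.2⟩
    else if h1 : x.1 ⟨n, by omega⟩ = 1 then Sum.inr (Sum.inr ())
    else Sum.inr (Sum.inl ⟨Fin.init (Fin.init x.1), greedy_init (greedy_init x.2)⟩)
  invFun := fun x => match x with
    | Sum.inl ⟨p, hp⟩ => ⟨Fin.snoc p 0, greedy_snoc_zero hp⟩
    | Sum.inr (Sum.inl ⟨q, hq⟩) => ⟨Fin.snoc (Fin.snoc q 0) 1, greedy_snoc10 hq⟩
    | Sum.inr (Sum.inr _) => ⟨fun _ => 1, greedy_one⟩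
  left_inv := by
    rintro ⟨c, hc⟩
    by_cases h0 : c (Fin.last (n+1)) = 0
    · simp only [dif_pos h0]
      apply Subtype.ext
      show Fin.snoc (Fin.init c) 0 = c
      rw [← h0]
      exact Fin.snoc_init_self c
    · by_cases h1 : c ⟨n, by omega⟩ = 1
      · simp only [dif_neg h0, dif_pos h1]
        apply Subtype.ext
        funext i
        exact (eq_one_of_tail hc (fin2_eq_one h0) h1 i).symm
      · simp only [dif_neg h0, dif_neg h1]
        apply Subtype.ext
        show Fin.snoc (Fin.snoc (Fin.init (Fin.init c)) 0) 1 = c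
        have e2 : Fin.init c (Fin.last n) = 0 := fin2_eq_zero h1
        have e3 : Fin.snoc (Fin.init (Fin.init c)) (0 : Fin 2) = Fin.init c := by
          rw [← e2]; exact Fin.snoc_init_self (Fin.init c)
        rw [e3, ← fin2_eq_one h0]
        exact Fin.snoc_init_self c
  right_inv := by
    rintro (⟨p, hp⟩ | ⟨q, hq⟩ | ⟨⟩) <;> dsimp only
    · have h0 : (Fin.snoc p (0 : Fin 2) : Fin (n+2) → Fin 2) (Fin.last (n+1)) = 0 := by
        rw [Fin.snoc_last]
      simp only [dif_pos h0]
      have he : Fin.init (Fin.snoc p (0 : Fin 2) : Fin (n+2) → Fin 2) = p := by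
        simp [Fin.init_snoc]
      congr 1
      exact Subtype.ext he
    · have hne0 : ¬ ((Fin.snoc (Fin.snoc q (0:Fin 2)) (1:Fin 2) : Fin (n+2) → Fin 2)
          (Fin.last (n+1)) = 0) := by
        rw [Fin.snoc_last]; decide
      have hmid : (Fin.snoc (Fin.snoc q (0:Fin 2)) (1:Fin 2) : Fin (n+2) → Fin 2)
          ⟨n, by omega⟩ = 0 := by
        rw [snoc_apply_lt _ _ _ (show ((⟨n, by omega⟩ : Fin (n+2)) : ℕ) < n + 1 by simp)]
        exact snoc_apply_last _ _ _ rfl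
      have hne1 : ¬ ((Fin.snoc (Fin.snoc q (0:Fin 2)) (1:Fin 2) : Fin (n+2) → Fin 2)
          ⟨n, by omega⟩ = 1) := by
        rw [hmid]; decide
      simp only [dif_neg hne0, dif_neg hne1]
      have he : Fin.init (Fin.init (Fin.snoc (Fin.snoc q (0:Fin 2)) (1:Fin 2) :
          Fin (n+2) → Fin 2)) = q := by
        simp [Fin.init_snoc]
      congr 2
      exact Subtype.ext he
    · have hne0 : ¬ ((fun _ : Fin (n+2) => (1:Fin 2)) (Fin.last (n+1)) = (0 : Fin 2)) := by
        intro h; simp at h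
      have h1 : (fun _ : Fin (n+2) => (1:Fin 2)) ⟨n, by omega⟩ = (1 : Fin 2) := rfl
      simp only [dif_neg hne0, dif_pos h1]
      rfl

instance decGreedy {n : ℕ} : DecidablePred (@Greedy n) := fun c => by
  unfold Greedy; infer_instance

end GreedyAux

open GreedyAux in
theorem count_greedy_words (n : ℕ) :
    Nat.card {c : Fin n → Fin 2 // Greedy c} = Nat.fib (n + 3) - 1 := by
  induction n using Nat.strong_induction_on with
  | _ n ih =>
    match n with
    | 0 => rw [Nat.card_eq_fintype_card]; decide
    | 1 => rw [Nat.card_eq_fintype_card]; decide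
    | (m+2) =>
      have h1 := ih (m+1) (by omega)
      have h2 := ih m (by omega)
      have hu : Nat.card Unit = 1 := Nat.card_unique
      rw [Nat.card_congr (theEquiv m), Nat.card_sum, Nat.card_sum, hu, h1, h2]
      have e1 : m + 1 + 3 = m + 4 := by omega
      have e2 : m + 2 + 3 = m + 5 := by omega
      rw [e1, e2]
      have ha : Nat.fib (m + 5) = Nat.fib (m + 3) + Nat.fib (m + 4) := Nat.fib_add_two
      have hb : 0 < Nat.fib (m + 3) := Nat.fib_pos.mpr (by omega)
      have hc : 0 < Nat.fib (m + 4) := Nat.fib_pos.mpr (by omega)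
      omega
end

section
/- For every n, the map from greedy binary words of length n to real numbers given by c ↦ ∑_{i=1}^n cᵢ/φⁱ is injective. -/
noncomputable def phi : ℝ := (1 + Real.sqrt 5) / 2

/-- Value of a binary word in base φ. -/
noncomputable def val {n : ℕ} (c : Fin n → Fin 2) : ℝ :=
  ∑ i : Fin n, (c i : ℕ) / phi ^ ((i : ℕ) + 1)

lemma phi_gt_one : (1:ℝ) < phi := by
  have h : Real.sqrt 1 < Real.sqrt 5 := by
    apply Real.sqrt_lt_sqrt <;> norm_num
  rw [Real.sqrt_one] at h
  unfold phi; linarith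

lemma phi_pos : (0:ℝ) < phi := lt_trans one_pos phi_gt_one

lemma phi_sq : phi ^ 2 = phi + 1 := by
  have h5 : Real.sqrt 5 ^ 2 = 5 := Real.sq_sqrt (by norm_num)
  unfold phi; nlinarith [h5]

lemma fin2 (x : Fin 2) : x = 0 ∨ x = 1 := by
  fin_cases x <;> simp

lemma val_succ {k : ℕ} (c : Fin (k+1) → Fin 2) :
    val c = (c 0 : ℕ) / phi + (1/phi) * val (fun i : Fin k => c i.succ) := by
  unfold val
  rw [Fin.sum_univ_succ, Finset.mul_sum]
  simp only [Fin.val_zero, pow_one, Fin.val_succ]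
  have hφ : phi ≠ 0 := ne_of_gt phi_pos
  congr 1
  · norm_num
  · apply Finset.sum_congr rfl
    intro i _
    rw [show (i:ℕ) + 1 + 1 = ((i:ℕ)+1) + 1 from rfl, pow_succ,
      mul_comm (phi ^ ((i:ℕ)+1)) phi, ← div_div, one_div, inv_mul_eq_div, div_right_comm]

lemma val_nonneg {m : ℕ} (w : Fin m → Fin 2) : 0 ≤ val w := by
  apply Finset.sum_nonneg
  intro i _
  apply div_nonneg (Nat.cast_nonneg _) (pow_nonneg phi_pos.le _)

def NoCons {m : ℕ} (w : Fin m → Fin 2) : Prop :=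
  ∀ i j : Fin m, (j:ℕ) = (i:ℕ) + 1 → ¬ (w i = 1 ∧ w j = 1)

lemma noCons_tail {k : ℕ} (w : Fin (k+1) → Fin 2) (hw : NoCons w) :
    NoCons (fun i : Fin k => w i.succ) := by
  intro i j hij
  exact hw i.succ j.succ (by simp [Fin.val_succ, hij])

lemma val_lt_one : ∀ m (w : Fin m → Fin 2), NoCons w → val w < 1 := by
  intro m
  induction m using Nat.strong_induction_on with
  | _ m ih =>
    match m with
    | 0 =>
      intro w _
      simp [val]
    | 1 =>
      intro w _
      have h0 : ((w 0 : ℕ) : ℝ) ≤ 1 := by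
        rcases fin2 (w 0) with h | h <;> simp [h]
      have : val w = (w 0 : ℕ) / phi ^ 1 := by
        unfold val; rw [Fin.sum_univ_one]; rfl
      rw [this, pow_one]
      rw [div_lt_one phi_pos]
      linarith [phi_gt_one]
    | (k+2) =>
      intro w hw
      have hw' := noCons_tail w hw
      rcases fin2 (w 0) with h0 | h0
      · have hlt : val (fun i : Fin (k+1) => w i.succ) < 1 :=
          ih (k+1) (by omega) _ hw'
        rw [val_succ, h0]
        simp only [Fin.val_zero, Nat.cast_zero, zero_div, zero_add]
        have h1φ : (0:ℝ) < 1/phi := one_div_pos.mpr phi_pos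
        calc (1/phi) * val (fun i : Fin (k+1) => w i.succ)
            < (1/phi) * 1 := by
              apply mul_lt_mul_of_pos_left hlt h1φ
          _ < 1 := by
              rw [mul_one, div_lt_one phi_pos]; exact phi_gt_one
      · -- w 0 = 1, so w 1 = 0
        have h1 : w 1 = 0 := by
          rcases fin2 (w 1) with h | h
          · exact h
          · exact absurd ⟨h0, h⟩ (hw 0 1 rfl)
        have hw'' := noCons_tail _ hw'
        have hlt : val (fun i : Fin k => w i.succ.succ) < 1 :=
          ih k (by omega) _ hw''
        rw [val_succ, h0, val_succ]
        have htail0 : w (Fin.succ 0) = 0 := by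
          rw [Fin.succ_zero_eq_one]; exact h1
        rw [htail0]
        simp only [Fin.val_one, Nat.cast_one, Fin.val_zero, Nat.cast_zero, zero_div, zero_add]
        have hφ : (0:ℝ) < phi := phi_pos
        have hsq : phi ^ 2 = phi + 1 := phi_sq
        have hv0 : 0 ≤ val (fun i : Fin k => w i.succ.succ) := val_nonneg _
        have key : 1/phi + (1/phi) * ((1/phi) * val (fun i : Fin k => w i.succ.succ))
            < 1/phi + 1/phi^2 := by
          have : (1/phi) * ((1/phi) * val (fun i : Fin k => w i.succ.succ))
              = (1/phi^2) * val (fun i : Fin k => w i.succ.succ) := by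
            ring
          rw [this]
          have : (1/phi^2) * val (fun i : Fin k => w i.succ.succ) < (1/phi^2) * 1 := by
            apply mul_lt_mul_of_pos_left hlt (one_div_pos.mpr (pow_pos phi_pos 2))
          linarith
        have heq : 1/phi + 1/phi^2 = 1 := by
          have hφ0 : phi ≠ 0 := ne_of_gt phi_pos
          field_simp
          nlinarith [hsq]
        linarith

lemma no11_after_zero {n : ℕ} (d : Fin n → Fin 2) (hd : Greedy d)
    (h0 : ∀ h : 0 < n, d ⟨0, h⟩ = 0) :
    ∀ i : ℕ, ∀ (h1 : i + 1 < n) (h2 : i + 2 < n),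
      ¬ (d ⟨i+1, h1⟩ = 1 ∧ d ⟨i+2, h2⟩ = 1) := by
  intro i
  induction i with
  | zero =>
    intro h1 h2 ⟨ha, hb⟩
    exact hd ⟨0, by omega⟩ ⟨1, h1⟩ ⟨2, h2⟩ rfl rfl ⟨h0 (by omega), ha, hb⟩
  | succ j ihj =>
    intro h1 h2 ⟨ha, hb⟩
    have hg := hd ⟨j+1, by omega⟩ ⟨j+2, h1⟩ ⟨j+3, h2⟩ rfl rfl
    have hj1 : d ⟨j+1, by omega⟩ = 1 := by
      rcases fin2 (d ⟨j+1, by omega⟩) with h | h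
      · exact absurd ⟨h, ha, hb⟩ hg
      · exact h
    exact ihj (by omega) h1 ⟨hj1, ha⟩

lemma greedy_tail {k : ℕ} (c : Fin (k+1) → Fin 2) (hc : Greedy c) :
    Greedy (fun i : Fin k => c i.succ) := by
  intro i j l hij hil
  exact hc i.succ j.succ l.succ (by simp only [Fin.val_succ]; omega)
    (by simp only [Fin.val_succ]; omega)

lemma noCons_of_greedy_zero {k : ℕ} (d : Fin (k+1) → Fin 2) (hd : Greedy d)
    (hd0 : d 0 = 0) : NoCons (fun i : Fin k => d i.succ) := by
  intro i j hij ⟨h1, h2⟩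
  have hi1 : i.succ = (⟨(i:ℕ)+1, by omega⟩ : Fin (k+1)) := Fin.ext rfl
  have hj1 : j.succ = (⟨(i:ℕ)+2, by omega⟩ : Fin (k+1)) := Fin.ext (by simp [hij])
  apply no11_after_zero d hd (fun _ => hd0) (i:ℕ) (by omega) (by omega)
  constructor
  · rw [← hi1]; exact h1
  · rw [← hj1]; exact h2

lemma val_lt_of_heads {k : ℕ} (c d : Fin (k+1) → Fin 2) (hd : Greedy d)
    (hc0 : c 0 = 1) (hd0 : d 0 = 0) : val d < val c := by
  have hnc := noCons_of_greedy_zero d hd hd0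
  have hlt : val (fun i : Fin k => d i.succ) < 1 := val_lt_one k _ hnc
  have h1φ : (0:ℝ) < 1/phi := one_div_pos.mpr phi_pos
  have hcge : 1/phi ≤ val c := by
    rw [val_succ c, hc0]
    simp only [Fin.val_one, Nat.cast_one]
    have := val_nonneg (fun i : Fin k => c i.succ)
    nlinarith
  have hdlt : val d < 1/phi := by
    rw [val_succ d, hd0]
    simp only [Fin.val_zero, Nat.cast_zero, zero_div, zero_add]
    calc (1/phi) * val (fun i : Fin k => d i.succ) < (1/phi) * 1 :=
      mul_lt_mul_of_pos_left hlt h1φ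
    _ = 1/phi := mul_one _
  linarith

theorem greedy_value_injective {n : ℕ} (c d : Fin n → Fin 2)
    (hc : Greedy c) (hd : Greedy d) (h : val c = val d) : c = d := by
  induction n with
  | zero => funext i; exact i.elim0
  | succ k ih =>
    rcases fin2 (c 0) with hc0 | hc0 <;> rcases fin2 (d 0) with hd0 | hd0
    case _ =>
      -- both 0
      have hval : val (fun i : Fin k => c i.succ) = val (fun i : Fin k => d i.succ) := by
        rw [val_succ, val_succ, hc0, hd0] at h
        simp only [Fin.val_zero, Nat.cast_zero, zero_div, zero_add] at h
        have hφ : (1/phi : ℝ) ≠ 0 := ne_of_gt (one_div_pos.mpr phi_pos)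
        exact mul_left_cancel₀ hφ h
      have htl := ih _ _ (greedy_tail c hc) (greedy_tail d hd) hval
      funext i
      refine Fin.cases ?_ ?_ i
      · rw [hc0, hd0]
      · intro j; exact congrFun htl j
    case _ => exact absurd h (ne_of_gt (val_lt_of_heads d c hc hd0 hc0)).symm
    case _ => exact absurd h (ne_of_lt (val_lt_of_heads c d hd hc0 hd0)).symm
    case _ =>
      have hval : val (fun i : Fin k => c i.succ) = val (fun i : Fin k => d i.succ) := by
        rw [val_succ, val_succ, hc0, hd0] at h
        simp only [Fin.val_one, Nat.cast_one] at h
        have hφ : (1/phi : ℝ) ≠ 0 := ne_of_gt (one_div_pos.mpr phi_pos)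
        exact mul_left_cancel₀ hφ (by linarith)
      have htl := ih _ _ (greedy_tail c hc) (greedy_tail d hd) hval
      funext i
      refine Fin.cases ?_ ?_ i
      · rw [hc0, hd0]
      · intro j; exact congrFun htl j
end

section
/- If c is a greedy word of length n ending in the block 10^h for some h ≥ 0, then the class of c·00 (c followed by two zeros) has cardinality at least #[c] + 1; concretely, appending 00 and applying the substitution 100 → 011 repeatedly inside the tail produces a word in [c·00] not of the form d·00 with d ∈ [c]. -/
lemma inv_phi_add_inv_phi_sq : phi⁻¹ + phi⁻¹ ^ 2 = 1 := by
  have hne : phi ≠ 0 := Real.goldenRatio_ne_zero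
  have hsq : phi ^ 2 = phi + 1 := Real.goldenRatio_sq
  field_simp
  linarith

lemma inv_phi_pow_add_inv_phi_pow (j : ℕ) :
    (phi ^ (j + 2))⁻¹ + (phi ^ (j + 3))⁻¹ = (phi ^ (j + 1))⁻¹ := by
  simp only [← inv_pow]
  linear_combination phi⁻¹ ^ (j + 1) * inv_phi_add_inv_phi_sq

/-- Positions of the ones obtained from a single one at position `m` by applying the substitution
`100 → 011` `t` times, each time to the last one. -/
def expansion : ℕ → ℕ → Finset ℕ
  | m, 0 => {m}
  | m, t + 1 => insert (m + 1) (expansion (m + 2) t)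

lemma mem_expansion_bounds {m t s : ℕ} (hs : s ∈ expansion m t) : m ≤ s ∧ s ≤ m + 2 * t := by
  induction t generalizing m with
  | zero => simp_all [expansion]
  | succ t ih =>
    rcases Finset.mem_insert.1 hs with rfl | hs
    · omega
    · have := ih hs; omega

lemma last_mem_expansion (m t : ℕ) : m + 2 * t ∈ expansion m t := by
  induction t generalizing m with
  | zero => simp [expansion]
  | succ t ih =>
    have := ih (m + 2)
    rw [show m + 2 * (t + 1) = m + 2 + 2 * t by ring]
    exact Finset.mem_insert_of_mem this

lemma sum_expansion (m t : ℕ) : ∑ s ∈ expansion m t, (phi ^ (s + 1))⁻¹ = (phi ^ (m + 1))⁻¹ := by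
  induction t generalizing m with
  | zero => simp [expansion]
  | succ t ih =>
    have hnot : m + 1 ∉ expansion (m + 2) t := fun h => by
      have := mem_expansion_bounds h; omega
    rw [expansion, Finset.sum_insert hnot, ih, ← inv_phi_pow_add_inv_phi_pow m]

lemma sum_fin_ite_mem {N : ℕ} {S : Finset ℕ} (hS : S ⊆ Finset.range N) (f : ℕ → ℝ) :
    ∑ i : Fin N, (if (i : ℕ) ∈ S then f i else 0) = ∑ s ∈ S, f s := by
  rw [Fin.sum_univ_eq_sum_range (fun i => if i ∈ S then f i else 0), Finset.sum_ite_mem,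
    Finset.inter_eq_right.2 hS]

def replaceSuffix {N : ℕ} (d : Fin N → Fin 2) (a : ℕ) (S : Finset ℕ) : Fin N → Fin 2 :=
  fun i => if (i : ℕ) < a then d i else if (i : ℕ) ∈ S then 1 else 0

lemma val_replaceSuffix {N a : ℕ} (d : Fin N → Fin 2) {S : Finset ℕ} (ha : a < N)
    (hS : S ⊆ Finset.range N) (haS : ∀ s ∈ S, a ≤ s)
    (hda : ∀ i : Fin N, (i : ℕ) = a → d i = 1) (hdgt : ∀ j : Fin N, a < (j : ℕ) → d j = 0) :
    val (replaceSuffix d a S) = val d - (phi ^ (a + 1))⁻¹ + ∑ s ∈ S, (phi ^ (s + 1))⁻¹ := by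
  have hdigit : ∀ i : Fin N, ((replaceSuffix d a S i : ℕ) : ℝ) =
      (d i : ℕ) - (if (i : ℕ) ∈ ({a} : Finset ℕ) then 1 else 0) +
        (if (i : ℕ) ∈ S then 1 else 0) := by
    intro i
    rcases lt_trichotomy (i : ℕ) a with hlt | heq | hgt
    · have : (i : ℕ) ∉ S := fun hi => (haS _ hi).not_gt hlt
      simp [replaceSuffix, hlt, this, hlt.ne]
    · simp only [replaceSuffix, heq, hda i heq]
      split_ifs <;> simp_all
    · simp only [replaceSuffix, hgt.not_gt, hdgt i hgt]
      split_ifs <;> simp_all [hgt.ne']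
  have hsingleton : {a} ⊆ Finset.range N := by simpa using ha
  simp only [val, hdigit, add_div, sub_div, ite_div, zero_div, one_div, Finset.sum_add_distrib,
    Finset.sum_sub_distrib]
  rw [sum_fin_ite_mem hS (fun s => (phi ^ (s + 1))⁻¹),
    sum_fin_ite_mem hsingleton (fun s => (phi ^ (s + 1))⁻¹), Finset.sum_singleton]

lemma val_snoc {n : ℕ} (d : Fin n → Fin 2) (x : Fin 2) :
    val (Fin.snoc d x) = val d + (x : ℕ) / phi ^ (n + 1) := by
  simp [val, Fin.sum_univ_castSucc]

lemma val_snoc_zero_zero {n : ℕ} (d : Fin n → Fin 2) : val (Fin.snoc (Fin.snoc d 0) 0) = val d := by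
  simp [val_snoc]

lemma snoc_snoc_apply_of_lt {α : Type*} {n : ℕ} (d : Fin n → α) (x y : α) (i : Fin (n + 2))
    (hi : (i : ℕ) < n) : (Fin.snoc (Fin.snoc d x) y : Fin (n + 2) → α) i = d ⟨i, hi⟩ := by
  simp [Fin.snoc, hi, Nat.lt_succ_of_lt hi, Fin.castLT]

lemma snoc_snoc_zero_zero_apply_of_le {α : Type*} [Zero α] {n : ℕ} (d : Fin n → α) (i : Fin (n + 2))
    (hi : n ≤ (i : ℕ)) : (Fin.snoc (Fin.snoc d 0) 0 : Fin (n + 2) → α) i = 0 := by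
  simp [Fin.snoc, hi.not_gt]

lemma card_class_add_one_le_card_class_snoc_zero_zero {n : ℕ} (c : Fin n → Fin 2)
    (e : Fin (n + 2) → Fin 2) (he : val e = val c) (i : Fin (n + 2)) (hi : n ≤ (i : ℕ))
    (hei : e i = 1) :
    Nat.card {d : Fin n → Fin 2 // val d = val c} + 1 ≤
      Nat.card {d : Fin (n + 2) → Fin 2 // val d = val (Fin.snoc (Fin.snoc c 0) 0)} := by
  let embed : Option {d : Fin n → Fin 2 // val d = val c} →
      {d : Fin (n + 2) → Fin 2 // val d = val (Fin.snoc (Fin.snoc c 0) 0)} :=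
    fun o => o.elim ⟨e, by rw [he, val_snoc_zero_zero]⟩
      fun d => ⟨Fin.snoc (Fin.snoc d.1 0) 0, by rw [val_snoc_zero_zero, val_snoc_zero_zero, d.2]⟩
  have hne : ∀ d : Fin n → Fin 2, (Fin.snoc (Fin.snoc d 0) 0 : Fin (n + 2) → Fin 2) ≠ e :=
    fun d hd => by
      simpa [hei] using (snoc_snoc_zero_zero_apply_of_le d i hi).symm.trans (congrFun hd i)
  have hinj : Function.Injective embed := by
    rintro (_ | ⟨d, _⟩) (_ | ⟨d', _⟩) h <;> simp only [embed, Option.elim, Subtype.mk.injEq] at h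
    · rfl
    · exact absurd h.symm (hne d')
    · exact absurd h (hne d)
    · obtain ⟨h', -⟩ := Fin.snoc_injective2 h
      obtain ⟨rfl, -⟩ := Fin.snoc_injective2 h'
      rfl
  rw [← Finite.card_option]
  exact Nat.card_le_card_of_injective embed hinj

theorem class_append_two_zeros_general {n h : ℕ} (c : Fin n → Fin 2)
    (hh : h < n)
    (hone : ∀ i : Fin n, (i : ℕ) = n - 1 - h → c i = 1)
    (hzeros : ∀ j : Fin n, n - 1 - h < (j : ℕ) → c j = 0) :
    Nat.card {d : Fin (n + 2) → Fin 2 //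
        val d = val (Fin.snoc (Fin.snoc c (0 : Fin 2)) (0 : Fin 2))} ≥
      Nat.card {d : Fin n → Fin 2 // val d = val c} + 1 := by
  set m := n - 1 - h
  set t := h / 2 + 1
  set c₀₀ : Fin (n + 2) → Fin 2 := Fin.snoc (Fin.snoc c 0) 0
  have hc₀₀_one : ∀ i : Fin (n + 2), (i : ℕ) = m → c₀₀ i = 1 := fun i hi =>
    (snoc_snoc_apply_of_lt c 0 0 i (by omega)).trans (hone _ hi)
  have hc₀₀_zero : ∀ j : Fin (n + 2), m < (j : ℕ) → c₀₀ j = 0 := fun j hj => by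
    rcases lt_or_ge (j : ℕ) n with hjn | hjn
    · exact (snoc_snoc_apply_of_lt c 0 0 j hjn).trans (hzeros _ hj)
    · exact snoc_snoc_zero_zero_apply_of_le c j hjn
  have hS : expansion m t ⊆ Finset.range (n + 2) := fun s hs => by
    have := mem_expansion_bounds hs
    simp only [Finset.mem_range]; omega
  have hval : val (replaceSuffix c₀₀ m (expansion m t)) = val c := by
    rw [val_replaceSuffix c₀₀ (by omega) hS (fun s hs => (mem_expansion_bounds hs).1) hc₀₀_one
      hc₀₀_zero, sum_expansion, sub_add_cancel, val_snoc_zero_zero]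
  -- `m + 2 * t = n + 1 - h % 2` is a position of the appended `00`.
  refine card_class_add_one_le_card_class_snoc_zero_zero c _ hval ⟨m + 2 * t, by omega⟩
    (by simp only; omega) ?_
  simp [replaceSuffix, last_mem_expansion]

theorem class_append_two_zeros {n h : ℕ} (c : Fin n → Fin 2)
    (hg : Greedy c) (hh : h < n)
    (hone : ∀ i : Fin n, (i : ℕ) = n - 1 - h → c i = 1)
    (hzeros : ∀ j : Fin n, n - 1 - h < (j : ℕ) → c j = 0) :
    Nat.card {d : Fin (n + 2) → Fin 2 //
        val d = val (Fin.snoc (Fin.snoc c (0 : Fin 2)) (0 : Fin 2))} ≥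
      Nat.card {d : Fin n → Fin 2 // val d = val c} + 1 :=
  class_append_two_zeros_general c hh hone hzeros
end

section
/- The IFS {f₀, f₁} with fᵢ(x) = (x+i)/φ does not satisfy the Open Set Condition: there is no nonempty bounded open set U ⊆ ℝ with f₀(U) ∪ f₁(U) ⊆ U and f₀(U) ∩ f₁(U) = ∅. -/
noncomputable def f (i : Fin 2) (x : ℝ) : ℝ := (x + (i : ℕ)) / phi

/-!
Volume counting (Moran's argument): `fᵢ` scales Lebesgue measure by `φ⁻¹`, so disjoint copies
`f₀ U, f₁ U ⊆ U` of an open bounded nonempty `U` would give `2 φ⁻¹ λ(U) ≤ λ(U)` with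
`0 < λ(U) < ∞`, i.e. `φ ≥ 2`; but `φ < 2`. In general, disjoint images of a set of positive finite
Haar measure under maps `x ↦ rᵢ • x + bᵢ` force `∑ |rᵢ| ^ dim ≤ 1`.
-/

open MeasureTheory Module Function

section Moran

variable {E : Type*} [NormedAddCommGroup E] [NormedSpace ℝ E] [MeasurableSpace E] [BorelSpace E]

theorem MeasurableSet.image_smul_add {s : Set E} (hs : MeasurableSet s) (r : ℝ) (b : E) :
    MeasurableSet ((fun x ↦ r • x + b) '' s) := by
  rw [← Set.image_image (· + b) (r • ·), Set.image_add_right, Set.image_smul]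
  exact (hs.const_smul₀ r).preimage (measurable_add_const _)

variable [FiniteDimensional ℝ E] (μ : Measure E) [μ.IsAddHaarMeasure]

theorem Measure.addHaar_image_smul_add (r : ℝ) (b : E) (s : Set E) :
    μ ((fun x ↦ r • x + b) '' s) = ENNReal.ofReal (|r| ^ finrank ℝ E) * μ s := by
  rw [← Set.image_image (· + b) (r • ·), Set.image_add_right, measure_preimage_add_right,
    Set.image_smul, Measure.addHaar_smul, abs_pow]

theorem sum_abs_pow_finrank_le_one_of_pairwise_disjoint {ι : Type*} [Fintype ι] (r : ι → ℝ) (b : ι → E) {U : Set E}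
    (hU : MeasurableSet U) (hpos : μ U ≠ 0) (hfin : μ U ≠ ⊤)
    (hsub : ∀ i, (fun x ↦ r i • x + b i) '' U ⊆ U)
    (hdisj : Pairwise (Disjoint on (fun i ↦ (fun x ↦ r i • x + b i) '' U))) :
    ∑ i, |r i| ^ finrank ℝ E ≤ 1 := by
  have hvol : ENNReal.ofReal (∑ i, |r i| ^ finrank ℝ E) * μ U ≤ 1 * μ U :=
    calc ENNReal.ofReal (∑ i, |r i| ^ finrank ℝ E) * μ U
        = ∑ i, μ ((fun x ↦ r i • x + b i) '' U) := by
          rw [ENNReal.ofReal_sum_of_nonneg fun i _ ↦ by positivity, Finset.sum_mul]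
          simp only [Measure.addHaar_image_smul_add]
      _ = μ (⋃ i, (fun x ↦ r i • x + b i) '' U) := by
          rw [measure_iUnion hdisj fun i ↦ hU.image_smul_add (r i) (b i), tsum_fintype]
      _ ≤ 1 * μ U := by rw [one_mul]; exact measure_mono (Set.iUnion_subset hsub)
  exact ENNReal.ofReal_le_one.1 ((ENNReal.mul_le_mul_iff_left hpos hfin).1 hvol)

end Moran

theorem f_eq_smul_add (i : Fin 2) : f i = fun x ↦ phi⁻¹ • x + (i : ℕ) / phi := by
  funext x
  simp only [f, smul_eq_mul]
  ring

theorem no_open_set_condition :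
    ¬ ∃ U : Set ℝ, U.Nonempty ∧ IsOpen U ∧ Bornology.IsBounded U ∧
      f 0 '' U ∪ f 1 '' U ⊆ U ∧ Disjoint (f 0 '' U) (f 1 '' U) := by
  rintro ⟨U, hne, hopen, hbd, hsub, hdisj⟩
  have hsub' : ∀ i, f i '' U ⊆ U := by
    simpa only [Fin.forall_fin_two, Set.union_subset_iff] using hsub
  have hdisj' : Pairwise (Disjoint on fun i ↦ f i '' U) := by
    simp [Pairwise, Fin.forall_fin_two, onFun, hdisj, hdisj.symm]
  simp only [f_eq_smul_add] at hsub' hdisj'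
  have hmoran := sum_abs_pow_finrank_le_one_of_pairwise_disjoint volume _ _ hopen.measurableSet
    (hopen.measure_ne_zero _ hne) hbd.measure_lt_top.ne hsub' hdisj'
  have hphi : phi = Real.goldenRatio := rfl
  simp only [hphi, Finset.sum_const, Finset.card_univ, Fintype.card_fin, finrank_self, pow_one,
    nsmul_eq_mul, abs_inv, abs_of_pos Real.goldenRatio_pos] at hmoran
  rw [Nat.cast_ofNat, mul_inv_le_iff₀ Real.goldenRatio_pos, one_mul] at hmoran
  exact hmoran.not_gt Real.goldenRatio_lt_two
end
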